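/- Under the Entropy Setup, with ρ̄ > 0, consider H(ρ,u) = η̃_m(ρ,ρu) as a function of the variables (ρ,u) with ρ > 0, u ∈ ℝ, where η̃_m(ρ,m) = η̌_m(ρ,m) − η̌_m(ρ̄,0). Then there exists a constant M > 0 depending only on γ such that |∂_ρ H(ρ,u)| ≤ Mρ^{θ−1} and |∂_u H(ρ,u)| ≤ M for all ρ > 0 and u ∈ ℝ. -/

import Mathlib

open MeasureTheory Real Set

noncomputable section

/-- The Lions–Perthame–Tadmor weak entropy
`η̌(ρ,m) = ∫_ℝ ½ s|s| [ρ^{2θ} − (m/ρ−s)²]_+^{(3−γ)/(2(γ−1))} ds`, with `2θ = γ−1`. -/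
def etaCheck (γ ρ m : ℝ) : ℝ :=
  ∫ s : ℝ, (1/2) * s * |s| *
    (max (ρ ^ (γ - 1) - (m / ρ - s) ^ (2:ℕ)) 0) ^ ((3 - γ) / (2 * (γ - 1)))

/-- The associated weak entropy flux
`q̌(ρ,m) = ∫_ℝ ½ s|s| (θs + (1−θ)m/ρ) [ρ^{2θ} − (m/ρ−s)²]_+^{(3−γ)/(2(γ−1))} ds`. -/
def qCheck (γ ρ m : ℝ) : ℝ :=
  ∫ s : ℝ, (1/2) * s * |s| * (((γ - 1)/2) * s + (1 - (γ - 1)/2) * (m / ρ)) *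
    (max (ρ ^ (γ - 1) - (m / ρ - s) ^ (2:ℕ)) 0) ^ ((3 - γ) / (2 * (γ - 1)))

/-- Partial derivative `η̌_ρ` in the variables `(ρ,m)`. -/
def etaCheckRho (γ ρ m : ℝ) : ℝ := deriv (fun x => etaCheck γ x m) ρ

/-- Partial derivative `η̌_m` in the variables `(ρ,m)`. -/
def etaCheckM (γ ρ m : ℝ) : ℝ := deriv (fun y => etaCheck γ ρ y) m

/-- The modified entropy `η̃(ρ,m) = η̌(ρ,m) − η̌_ρ(ρ̄,0)(ρ−ρ̄) − η̌_m(ρ̄,0)m`. -/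
def etaTilde (γ ρbar ρ m : ℝ) : ℝ :=
  etaCheck γ ρ m - etaCheckRho γ ρbar 0 * (ρ - ρbar) - etaCheckM γ ρbar 0 * m

/-- The modified entropy flux
`q̃(ρ,m) = q̌(ρ,m) − η̌_ρ(ρ̄,0)m − η̌_m(ρ̄,0)(m²/ρ + p(ρ))`, `p(ρ) = κρ^γ`. -/
def qTilde (γ κ ρbar ρ m : ℝ) : ℝ :=
  qCheck γ ρ m - etaCheckRho γ ρbar 0 * m
    - etaCheckM γ ρbar 0 * (m ^ (2:ℕ) / ρ + κ * ρ ^ γ)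

/-- `η̃_ρ` in the variables `(ρ,m)`. -/
def etaTildeRho (γ ρbar ρ m : ℝ) : ℝ := deriv (fun x => etaTilde γ ρbar x m) ρ

/-- `η̃_m` in the variables `(ρ,m)`. -/
def etaTildeM (γ ρbar ρ m : ℝ) : ℝ := deriv (fun y => etaTilde γ ρbar ρ y) m

/-- `H(ρ,u) = η̃_m(ρ,ρu) = η̌_m(ρ,ρu) − η̌_m(ρ̄,0)` as a function of `(ρ,u)`. -/
def Hfun (γ ρbar ρ u : ℝ) : ℝ := etaCheckM γ ρ (ρ * u) - etaCheckM γ ρbar 0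

/-!
Substituting `s = m/ρ - ρ^θ z` rescales the kernel of `η̌` to the unit profile
`[1 - z²]_+^α`, `α = (3 - γ)/(2(γ - 1)) > -1`, and differentiating under the integral sign gives
`η̌_m(ρ, m) = ∫ |m/ρ - ρ^θ z| [1 - z²]_+^α dz`. Hence `H(ρ, u) = G(u, ρ^θ) - η̌_m(ρ̄, 0)` with
`G(v, c) = ∫ |v - c z| [1 - z²]_+^α dz`. Since the profile lives on `[-1, 1]`, `G` is Lipschitz in
each variable with constant `A = ∫ [1 - z²]_+^α`, so `|∂_u H| ≤ A` and `|∂_ρ H| ≤ A θ ρ^{θ-1}`.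
-/

namespace LPTEntropy

open Filter Topology Function NNReal

lemma abs_sub_mul_le_of_abs_le_one (v c : ℝ) {z : ℝ} (hz : |z| ≤ 1) :
    |v - c * z| ≤ |v| + |c| :=
  calc |v - c * z| ≤ |v| + |c| * |z| := by rw [← abs_mul]; exact abs_sub _ _
    _ ≤ |v| + |c| := by gcongr; exact mul_le_of_le_one_right (abs_nonneg c) hz

lemma hasDerivAt_half_mul_abs (x : ℝ) : HasDerivAt (fun t : ℝ => 1 / 2 * t * |t|) |x| x := by
  have hne : ∀ y ≠ (0 : ℝ), HasDerivAt (fun t : ℝ => 1 / 2 * t * |t|) |y| y := by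
    intro y hy
    refine (((hasDerivAt_id' y).const_mul (1 / 2 : ℝ)).mul (hasDerivAt_abs hy)).congr_deriv ?_
    rcases hy.lt_or_gt with hy | hy
    · simp only [abs_of_neg hy, sign_neg hy, SignType.coe_neg_one]; ring
    · simp only [abs_of_pos hy, sign_pos hy, SignType.coe_one]; ring
  rcases eq_or_ne x 0 with rfl | hx
  · exact hasDerivAt_of_hasDerivAt_of_ne hne (by fun_prop) continuous_abs.continuousAt
  · exact hne x hx

lemma _root_.LipschitzWith.abs_deriv_comp_le {φ g : ℝ → ℝ} {K : ℝ≥0} (hφ : LipschitzWith K φ)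
    {x g' : ℝ} (hg : HasDerivAt g g' x) : |deriv (fun y => φ (g y)) x| ≤ K * |g'| := by
  by_cases hd : DifferentiableAt ℝ (fun y => φ (g y)) x
  swap
  · rw [deriv_zero_of_not_differentiableAt hd, abs_zero]; positivity
  refine le_of_tendsto_of_tendsto (hasDerivAt_iff_tendsto_slope.1 hd.hasDerivAt).abs
    ((hasDerivAt_iff_tendsto_slope.1 hg).abs.const_mul (K : ℝ)) (Eventually.of_forall fun y => ?_)
  simp only [slope_def_field, abs_div, ← mul_div_assoc]
  gcongr
  simpa [Real.dist_eq] using hφ.dist_le_mul (g y) (g x)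

section WeightOnUnitInterval

variable {g : ℝ → ℝ}

lemma _root_.MeasureTheory.Integrable.continuous_mul_of_support_subset (hg : Integrable g)
    (hsupp : support g ⊆ Icc (-1) 1) {f : ℝ → ℝ} (hf : Continuous f) :
    Integrable (fun z => f z * g z) :=
  (integrableOn_iff_integrable_of_support_subset
    ((support_mul_subset_right _ _).trans hsupp)).1
    (hg.integrableOn.continuousOn_mul hf.continuousOn isCompact_Icc)

def absMoment (g : ℝ → ℝ) (v c : ℝ) : ℝ := ∫ z, |v - c * z| * g z

lemma abs_absMoment_sub_le (hg : Integrable g) (hsupp : support g ⊆ Icc (-1) 1)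
    (v₁ v₂ c₁ c₂ : ℝ) :
    |absMoment g v₁ c₁ - absMoment g v₂ c₂| ≤ (∫ z, |g z|) * (|v₁ - v₂| + |c₁ - c₂|) := by
  have hint : ∀ v c : ℝ, Integrable (fun z => |v - c * z| * g z) := fun v c =>
    hg.continuous_mul_of_support_subset hsupp (by fun_prop)
  rw [absMoment, absMoment, ← integral_sub (hint v₁ c₁) (hint v₂ c₂), ← integral_mul_const,
    ← Real.norm_eq_abs]
  refine norm_integral_le_of_norm_le (hg.abs.mul_const _) (ae_of_all _ fun z => ?_)
  rw [Real.norm_eq_abs, ← sub_mul, abs_mul, mul_comm]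
  rcases eq_or_ne (g z) 0 with hz | hz
  · simp [hz]
  gcongr
  calc |(|v₁ - c₁ * z| - |v₂ - c₂ * z|)| ≤ |(v₁ - v₂) - (c₁ - c₂) * z| := by
        rw [show (v₁ - v₂) - (c₁ - c₂) * z = (v₁ - c₁ * z) - (v₂ - c₂ * z) by ring]
        exact abs_abs_sub_abs_le_abs_sub _ _
    _ ≤ |v₁ - v₂| + |c₁ - c₂| := abs_sub_mul_le_of_abs_le_one _ _ (abs_le.2 (hsupp hz))

lemma lipschitzWith_absMoment_left (hg : Integrable g) (hsupp : support g ⊆ Icc (-1) 1)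
    (c : ℝ) : LipschitzWith (∫ z, |g z|).toNNReal (absMoment g · c) :=
  LipschitzWith.of_dist_le' fun v₁ v₂ => by
    simpa [Real.dist_eq] using abs_absMoment_sub_le hg hsupp v₁ v₂ c c

lemma lipschitzWith_absMoment_right (hg : Integrable g) (hsupp : support g ⊆ Icc (-1) 1)
    (v : ℝ) : LipschitzWith (∫ z, |g z|).toNNReal (absMoment g v) :=
  LipschitzWith.of_dist_le' fun c₁ c₂ => by
    simpa [Real.dist_eq] using abs_absMoment_sub_le hg hsupp v v c₁ c₂

lemma hasDerivAt_integral_half_mul_abs (hg : Integrable g) (hsupp : support g ⊆ Icc (-1) 1)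
    (v c : ℝ) :
    HasDerivAt (fun v => ∫ z, 1 / 2 * (v - c * z) * |v - c * z| * g z) (absMoment g v c) v := by
  have hint : ∀ f : ℝ → ℝ, Continuous f → Integrable (fun z => f z * g z) := fun f hf =>
    hg.continuous_mul_of_support_subset hsupp hf
  refine (hasDerivAt_integral_of_dominated_loc_of_deriv_le (Metric.ball_mem_nhds v one_pos)
    (F := fun w z => 1 / 2 * (w - c * z) * |w - c * z| * g z) (F' := fun w z => |w - c * z| * g z)
    (bound := fun z => (|v| + 1 + |c|) * |g z|)
    (Eventually.of_forall fun w => (hint _ (by fun_prop)).aestronglyMeasurable)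
    (hint _ (by fun_prop)) (hint _ (by fun_prop)).aestronglyMeasurable
    (ae_of_all _ fun z w hw => ?_) (hg.abs.const_mul _) (ae_of_all _ fun z w _ => ?_)).2
  · rw [Real.norm_eq_abs, abs_mul, abs_abs]
    rcases eq_or_ne (g z) 0 with hz | hz
    · simp [hz]
    gcongr
    have hw : |w| ≤ |v| + 1 := by
      have := abs_sub_abs_le_abs_sub w v
      rw [Metric.mem_ball, Real.dist_eq] at hw
      linarith
    linarith [abs_sub_mul_le_of_abs_le_one w c (abs_le.2 (hsupp hz))]
  · exact (((hasDerivAt_half_mul_abs _).comp w ((hasDerivAt_id' w).sub_const (c * z))).mul_const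
      (g z)).congr_deriv (by ring)

end WeightOnUnitInterval

section Profile

def profile (α y : ℝ) : ℝ := (max (1 - y ^ 2) 0) ^ α

variable {α : ℝ}

lemma profile_nonneg (y : ℝ) : 0 ≤ profile α y := Real.rpow_nonneg (le_max_right _ _) _

lemma support_profile_subset (hα : α ≠ 0) : support (profile α) ⊆ Icc (-1) 1 := by
  intro y hy
  by_contra hy'
  have : 1 - y ^ 2 ≤ 0 := by
    rw [mem_Icc, ← abs_le, not_le] at hy'
    nlinarith [sq_abs y]
  exact hy (by rw [profile, max_eq_right this, Real.zero_rpow hα])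

lemma measurable_profile : Measurable (profile α) := by
  unfold profile; fun_prop

lemma profile_le_one_add_rpow_add_rpow {y : ℝ} (hy : y ∈ Icc (-1) 1) :
    profile α y ≤ 1 + (1 - y) ^ α + (1 + y) ^ α := by
  have h₁ : 0 ≤ (1 - y) ^ α := Real.rpow_nonneg (by linarith [hy.2]) _
  have h₂ : 0 ≤ (1 + y) ^ α := Real.rpow_nonneg (by linarith [hy.1]) _
  rcases le_or_gt 0 α with hα | hα
  · have : profile α y ≤ 1 :=
      Real.rpow_le_one (le_max_right _ _) (max_le (by nlinarith) zero_le_one) hα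
    linarith
  rcases eq_or_lt_of_le (abs_le.2 hy) with hy₁ | hy₁
  · rw [profile, max_eq_right (by nlinarith [sq_abs y]), Real.zero_rpow hα.ne]
    linarith
  -- `1 - y² = (1 - y)(1 + y)` is at least the smaller factor, and `t ↦ t ^ α` is antitone
  rw [abs_lt] at hy₁
  have hpos : 0 < 1 - y ^ 2 := by nlinarith
  rw [profile, max_eq_left hpos.le]
  rcases le_total 0 y with hy₀ | hy₀
  · have : (1 - y ^ 2) ^ α ≤ (1 - y) ^ α :=
      Real.rpow_le_rpow_of_nonpos (by linarith) (by nlinarith) hα.le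
    linarith
  · have : (1 - y ^ 2) ^ α ≤ (1 + y) ^ α :=
      Real.rpow_le_rpow_of_nonpos (by linarith) (by nlinarith) hα.le
    linarith

lemma integrable_profile (hα₀ : α ≠ 0) (hα : -1 < α) : Integrable (profile α) := by
  have hdom : IntegrableOn (fun y : ℝ => 1 + (1 - y) ^ α + (1 + y) ^ α) (Icc (-1) 1) := by
    have hl : IntervalIntegrable (fun y : ℝ => (1 - y) ^ α) volume (-1) 1 := by
      simpa [show (1 : ℝ) - 2 = -1 by norm_num] using
        (intervalIntegral.intervalIntegrable_rpow' hα (a := 2) (b := 0)).comp_sub_left 1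
    have hr : IntervalIntegrable (fun y : ℝ => (1 + y) ^ α) volume (-1) 1 := by
      simpa [add_comm, show (2 : ℝ) - 1 = 1 by norm_num] using
        (intervalIntegral.intervalIntegrable_rpow' hα (a := 0) (b := 2)).comp_add_right 1
    rw [← intervalIntegrable_iff_integrableOn_Icc_of_le (by norm_num)]
    exact (intervalIntegrable_const.add hl).add hr
  refine (integrableOn_iff_integrable_of_support_subset (support_profile_subset hα₀)).1
    (hdom.mono' measurable_profile.aestronglyMeasurable ((ae_restrict_iff' measurableSet_Icc).2
      (ae_of_all _ fun y hy => ?_)))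
  rw [Real.norm_eq_abs, abs_of_nonneg (profile_nonneg y)]
  exact profile_le_one_add_rpow_add_rpow hy

lemma max_sq_sub_sq_rpow {c : ℝ} (hc : 0 < c) (α t : ℝ) :
    (max (c ^ 2 - t ^ 2) 0) ^ α = (c ^ 2) ^ α * profile α (t / c) := by
  have hc2 : 0 < c ^ 2 := by positivity
  rw [profile, ← Real.mul_rpow hc2.le (le_max_right _ _), mul_max_of_nonneg _ _ hc2.le, mul_zero,
    mul_sub, mul_one, div_pow, mul_div_cancel₀ _ hc2.ne']

lemma integral_mul_max_sq_sub_sq_rpow (w : ℝ → ℝ) {c : ℝ} (hc : 0 < c) (α v : ℝ) :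
    ∫ s, w s * (max (c ^ 2 - (v - s) ^ 2) 0) ^ α
      = c * (c ^ 2) ^ α * ∫ z, w (v - c * z) * profile α z := by
  have hshift := integral_sub_left_eq_self (fun t => w (v - t) * (max (c ^ 2 - t ^ 2) 0) ^ α)
    volume v
  simp only [sub_sub_cancel] at hshift
  rw [hshift, ← integral_const_mul]
  have hscale := Measure.integral_comp_mul_left
    (fun t => c * (c ^ 2) ^ α * (w (v - t) * profile α (t / c))) c
  simp only [mul_div_cancel_left₀ _ hc.ne', abs_of_pos (inv_pos.2 hc), smul_eq_mul] at hscale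
  rw [hscale, ← integral_const_mul]
  congr 1 with t
  rw [max_sq_sub_sq_rpow hc]
  field_simp

end Profile

def lptExponent (γ : ℝ) : ℝ := (3 - γ) / (2 * (γ - 1))

variable {γ ρ : ℝ}

lemma lptExponent_ne_zero (hγ : γ ≠ 1) (h3 : γ ≠ 3) : lptExponent γ ≠ 0 :=
  div_ne_zero (sub_ne_zero.2 h3.symm) (mul_ne_zero two_ne_zero (sub_ne_zero.2 hγ))

lemma neg_one_lt_lptExponent (hγ : 1 < γ) : -1 < lptExponent γ := by
  rw [lptExponent, lt_div_iff₀ (by linarith)]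
  linarith

lemma etaCheck_eq_integral_profile (hγ : γ ≠ 1) (hρ : 0 < ρ) (m : ℝ) :
    etaCheck γ ρ m = ρ * ∫ z, 1 / 2 * (m / ρ - ρ ^ ((γ - 1) / 2) * z)
      * |m / ρ - ρ ^ ((γ - 1) / 2) * z| * profile (lptExponent γ) z := by
  set c := ρ ^ ((γ - 1) / 2)
  have hsq : ρ ^ (γ - 1) = c ^ 2 := by
    rw [← Real.rpow_natCast, ← Real.rpow_mul hρ.le]
    norm_num
  have hρc : c * (c ^ 2) ^ lptExponent γ = ρ := by
    rw [← hsq, ← Real.rpow_mul hρ.le, ← Real.rpow_add hρ, lptExponent]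
    convert Real.rpow_one ρ using 2
    field_simp [sub_ne_zero.2 hγ]
    ring
  rw [etaCheck, ← lptExponent]
  simp only [hsq]
  rw [integral_mul_max_sq_sub_sq_rpow (fun s => 1 / 2 * s * |s|) (by positivity), hρc]

lemma etaCheckM_eq_absMoment (hγ : 1 < γ) (h3 : γ ≠ 3) (hρ : 0 < ρ) (m : ℝ) :
    etaCheckM γ ρ m = absMoment (profile (lptExponent γ)) (m / ρ) (ρ ^ ((γ - 1) / 2)) := by
  have hα := lptExponent_ne_zero hγ.ne' h3
  have hI := (hasDerivAt_integral_half_mul_abs (integrable_profile hα (neg_one_lt_lptExponent hγ))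
    (support_profile_subset hα) (m / ρ) (ρ ^ ((γ - 1) / 2))).comp m ((hasDerivAt_id' m).div_const ρ)
  rw [etaCheckM, funext (etaCheck_eq_integral_profile hγ.ne' hρ)]
  exact (hI.const_mul ρ).deriv.trans (by field_simp)

lemma Hfun_eq_absMoment (hγ : 1 < γ) (h3 : γ ≠ 3) (ρbar : ℝ) (hρ : 0 < ρ) (u : ℝ) :
    Hfun γ ρbar ρ u
      = absMoment (profile (lptExponent γ)) u (ρ ^ ((γ - 1) / 2)) - etaCheckM γ ρbar 0 := by
  rw [Hfun, etaCheckM_eq_absMoment hγ h3 hρ, mul_div_cancel_left₀ _ hρ.ne']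

lemma abs_deriv_Hfun_rho_le (hγ : 1 < γ) (h3 : γ ≠ 3) (ρbar : ℝ) (hρ : 0 < ρ) (u : ℝ) :
    |deriv (fun x => Hfun γ ρbar x u) ρ|
      ≤ (∫ z, |profile (lptExponent γ) z|) * ((γ - 1) / 2 * ρ ^ ((γ - 1) / 2 - 1)) := by
  have hα := lptExponent_ne_zero hγ.ne' h3
  have hφ := lipschitzWith_absMoment_right (integrable_profile hα (neg_one_lt_lptExponent hγ))
    (support_profile_subset hα) u
  have hH : (fun x => Hfun γ ρbar x u) =ᶠ[𝓝 ρ]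
      fun x => absMoment (profile (lptExponent γ)) u (x ^ ((γ - 1) / 2)) - etaCheckM γ ρbar 0 :=
    (eventually_gt_nhds hρ).mono fun x hx => Hfun_eq_absMoment hγ h3 ρbar hx u
  rw [hH.deriv_eq, deriv_sub_const]
  have := hφ.abs_deriv_comp_le (Real.hasDerivAt_rpow_const (p := (γ - 1) / 2) (Or.inl hρ.ne'))
  rwa [Real.coe_toNNReal _ (integral_nonneg fun _ => abs_nonneg _),
    abs_of_pos (show 0 < (γ - 1) / 2 * ρ ^ ((γ - 1) / 2 - 1) by
      have : 0 < γ - 1 := by linarith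
      positivity)] at this

lemma abs_deriv_Hfun_u_le (hγ : 1 < γ) (h3 : γ ≠ 3) (ρbar : ℝ) (hρ : 0 < ρ) (u : ℝ) :
    |deriv (fun v => Hfun γ ρbar ρ v) u| ≤ ∫ z, |profile (lptExponent γ) z| := by
  have hα := lptExponent_ne_zero hγ.ne' h3
  have hφ := lipschitzWith_absMoment_left (integrable_profile hα (neg_one_lt_lptExponent hγ))
    (support_profile_subset hα) (ρ ^ ((γ - 1) / 2))
  rw [funext (Hfun_eq_absMoment hγ h3 ρbar hρ), deriv_sub_const]
  simpa [Real.coe_toNNReal _ (integral_nonneg fun _ => abs_nonneg _)] using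
    norm_deriv_le_of_lipschitz (x₀ := u) hφ

lemma not_integrable_half_mul_abs : ¬ Integrable (fun s : ℝ => 1 / 2 * s * |s|) := by
  intro h
  have : IntegrableOn (fun s : ℝ => s ^ (2 : ℝ)) (Ioi 1) :=
    IntegrableOn.congr_fun (h.integrableOn.const_mul 2) (fun s hs => by
      rw [abs_of_pos (one_pos.trans hs), Real.rpow_two]; ring) measurableSet_Ioi
  exact absurd ((integrableOn_Ioi_rpow_iff one_pos).1 this) (by norm_num)

/-- At `γ = 3` the kernel exponent is `0` and `0 ^ 0 = 1` for `Real.rpow`, so the integrand of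
`etaCheck` is `½ s|s|` on all of `ℝ` and the integral takes its junk value `0`. -/
lemma etaCheckM_three (ρ m : ℝ) : etaCheckM 3 ρ m = 0 := by
  have hη : ∀ y, etaCheck 3 ρ y = 0 := fun y => by
    simp only [etaCheck, sub_self, zero_div, Real.rpow_zero, mul_one]
    exact integral_undef not_integrable_half_mul_abs
  simp [etaCheckM, hη]

end LPTEntropy

open LPTEntropy in
/-- there is `M > 0` depending only on `γ` such that for every `ρ̄ > 0`,
`|∂_ρ H| ≤ Mρ^{θ−1}` and `|∂_u H| ≤ M` for all `ρ > 0`, `u ∈ ℝ`, where `θ = (γ−1)/2`. -/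
theorem H_derivative_bounds (γ : ℝ) (hγ : 1 < γ) :
    ∃ M : ℝ, 0 < M ∧ ∀ ρbar : ℝ, 0 < ρbar → ∀ ρ : ℝ, 0 < ρ → ∀ u : ℝ,
      |deriv (fun x => Hfun γ ρbar x u) ρ| ≤ M * ρ ^ ((γ - 1) / 2 - 1) ∧
      |deriv (fun v => Hfun γ ρbar ρ v) u| ≤ M := by
  set A := ∫ z, |profile (lptExponent γ) z|
  have hA : 0 ≤ A := integral_nonneg fun _ => abs_nonneg _
  have hθ : 0 < (γ - 1) / 2 := by linarith
  refine ⟨(A + 1) * ((γ - 1) / 2 + 1), by positivity, fun ρbar _ ρ hρ u => ?_⟩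
  have hρθ : 0 < ρ ^ ((γ - 1) / 2 - 1) := by positivity
  by_cases h3 : γ = 3
  · simp only [Hfun, h3, etaCheckM_three, sub_self, deriv_const, abs_zero]
    constructor <;> positivity
  refine ⟨(abs_deriv_Hfun_rho_le hγ h3 ρbar hρ u).trans ?_,
    (abs_deriv_Hfun_u_le hγ h3 ρbar hρ u).trans (by nlinarith)⟩
  rw [← mul_assoc]
  gcongr <;> linarith
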